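/- arXiv:2501.12652 — 2 statements merged into one kernel-verified Lean document; each statement's English description precedes it below -/
import Mathlib

section
/- If x is a permutation matrix encoding the tour σ : Fin n → Fin n, then H_B(x) = Σ_v C_{σ(v), σ(v+1)} (cyclic indexing), i.e., the QUBO cost term evaluated at a valid tour equals the total length of that tour. -/
/-- Evaluated at the permutation matrix encoding a tour `σ`, the QUBO cost term
equals the total length of the tour. -/
theorem stmt_2 (n : ℕ) [NeZero n] (hn : 2 ≤ n) (C : Fin n → Fin n → ℝ)
    (hdiag : ∀ i, C i i = 0) (σ : Equiv.Perm (Fin n)) :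
    (∑ i : Fin n, ∑ j : Fin n,
        if i ≠ j then
          C i j * ∑ v : Fin n,
            (if σ v = i then (1 : ℝ) else 0) * (if σ (v + 1) = j then (1 : ℝ) else 0)
        else 0)
      = ∑ v : Fin n, C (σ v) (σ (v + 1)) := by
  have h : ∀ i j : Fin n,
      (if i ≠ j then
          C i j * ∑ v : Fin n,
            (if σ v = i then (1 : ℝ) else 0) * (if σ (v + 1) = j then (1 : ℝ) else 0)
        else 0)
      = ∑ v : Fin n, if i ≠ j then
          C i j * ((if σ v = i then (1 : ℝ) else 0) * (if σ (v + 1) = j then (1 : ℝ) else 0))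
        else 0 := by
    intro i j; split <;> simp [Finset.mul_sum]
  simp_rw [h]
  refine Eq.trans (Finset.sum_congr rfl fun i _ => Finset.sum_comm) ?_
  rw [Finset.sum_comm]
  refine Finset.sum_congr rfl fun v _ => ?_
  rw [Fintype.sum_eq_single (σ v) (fun x hx => ?_),
      Fintype.sum_eq_single (σ (v+1)) (fun y hy => ?_)]
  · by_cases hc : σ v = σ (v+1) <;> simp [hc, hdiag]
  · simp [Ne.symm hy]
  · exact Finset.sum_eq_zero fun y _ => by simp [Ne.symm hx]
end

section
/- Consequently, under the condition A > n·max_{i,j} C_{ij} with C ≥ 0, the minimum of the TSP QUBO H = H_A + H_B over all binary assignments equals the minimum tour length min_σ Σ_v C_{σ(v),σ(v+1)} over all cyclic permutations σ of the n cities. -/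
/-- Real value of a binary (Bool) variable. -/
def bval (b : Bool) : ℝ := if b then 1 else 0

/-- The permutation-matrix penalty term of the TSP QUBO. -/
def HA (n : ℕ) (A : ℝ) (x : Fin n × Fin n → Bool) : ℝ :=
  A * ((∑ j : Fin n, (1 - ∑ v : Fin n, bval (x (j, v)))^2) +
       (∑ v : Fin n, (1 - ∑ j : Fin n, bval (x (j, v)))^2))

/-- The tour-cost term of the TSP QUBO (with `B = 1`, cyclic successor `v + 1`). -/
def HB (n : ℕ) [NeZero n] (C : Fin n → Fin n → ℝ) (x : Fin n × Fin n → Bool) : ℝ :=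
  ∑ i : Fin n, ∑ j : Fin n,
    if i ≠ j then C i j * ∑ v : Fin n, bval (x (i, v)) * bval (x (j, v + 1)) else 0

/-- Length of the cyclic tour given by the permutation `σ`. -/
def tourCost (n : ℕ) [NeZero n] (C : Fin n → Fin n → ℝ) (σ : Equiv.Perm (Fin n)) : ℝ :=
  ∑ v : Fin n, C (σ v) (σ (v + 1))

lemma bval_nonneg (b : Bool) : 0 ≤ bval b := by unfold bval; split <;> norm_num

lemma sum_bval_card {n : ℕ} (g : Fin n → Bool) :
    ∑ j, bval (g j) = ((Finset.univ.filter (fun j => g j = true)).card : ℝ) := by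
  simp [bval, Finset.sum_boole]

lemma succ_ne {n : ℕ} [NeZero n] (hn : 2 ≤ n) (v : Fin n) : v + 1 ≠ v := by
  intro h
  have h1 : (1 : Fin n) = 0 := by
    have := congrArg (fun w => w - v) h
    simpa [add_sub_cancel_right] using this
  have := congrArg Fin.val h1
  simp [Fin.val_one, Fin.val_zero, Nat.mod_eq_of_lt (by omega : 1 < n)] at this

lemma HB_perm (n : ℕ) [NeZero n] (hn : 2 ≤ n) (C : Fin n → Fin n → ℝ)
    (σ : Equiv.Perm (Fin n)) (x : Fin n × Fin n → Bool)
    (hx : ∀ j v, x (j, v) = true ↔ σ v = j) :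
    HB n C x = tourCost n C σ := by
  have hb : ∀ j v, bval (x (j, v)) = if σ v = j then 1 else 0 := by
    intro j v
    by_cases h : σ v = j
    · simp [bval, (hx j v).2 h, h]
    · have : x (j, v) ≠ true := fun hh => h ((hx j v).1 hh)
      simp [bval, this, h]
  unfold HB tourCost
  calc ∑ i : Fin n, ∑ j : Fin n,
        (if i ≠ j then C i j * ∑ v : Fin n, bval (x (i, v)) * bval (x (j, v + 1)) else 0)
      = ∑ i : Fin n, ∑ j : Fin n, ∑ v : Fin n,
        (if i ≠ j then C i j else 0) * ((if σ v = i then 1 else 0) * (if σ (v+1) = j then 1 else 0)) := by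
        refine Finset.sum_congr rfl fun i _ => Finset.sum_congr rfl fun j _ => ?_
        by_cases h : i ≠ j
        · simp only [hb]
          rw [if_pos h, Finset.mul_sum]
          exact Finset.sum_congr rfl fun v _ => by rw [if_pos h]
        · simp [h]
    _ = ∑ v : Fin n, ∑ i : Fin n, ∑ j : Fin n,
        (if i ≠ j then C i j else 0) * ((if σ v = i then 1 else 0) * (if σ (v+1) = j then 1 else 0)) := by
        have h1 : ∀ i : Fin n, (∑ j : Fin n, ∑ v : Fin n,
            (if i ≠ j then C i j else 0) * ((if σ v = i then 1 else 0) * (if σ (v+1) = j then 1 else 0)))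
            = ∑ v : Fin n, ∑ j : Fin n,
            (if i ≠ j then C i j else 0) * ((if σ v = i then 1 else 0) * (if σ (v+1) = j then 1 else 0)) :=
          fun i => Finset.sum_comm
        simp_rw [h1]
        exact Finset.sum_comm
    _ = ∑ v : Fin n, C (σ v) (σ (v + 1)) := by
        refine Finset.sum_congr rfl fun v _ => ?_
        rw [Finset.sum_eq_single (σ v)]
        · rw [Finset.sum_eq_single (σ (v+1))]
          · have hne : σ v ≠ σ (v+1) := fun h => (succ_ne hn v) (σ.injective h.symm)
            rw [if_pos hne, if_pos rfl, if_pos rfl]; ring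
          · intro j _ hj; simp [Ne.symm hj]
          · simp
        · intro i _ hi
          simp [Ne.symm hi]
        · simp

lemma extract_perm {n : ℕ} (x : Fin n × Fin n → Bool)
    (hrow : ∀ v, ∑ j, bval (x (j, v)) = 1)
    (hcol : ∀ j, ∑ v, bval (x (j, v)) = 1) :
    ∃ σ : Equiv.Perm (Fin n), ∀ j v, x (j, v) = true ↔ σ v = j := by
  have hrow' : ∀ v : Fin n, (Finset.univ.filter (fun j => x (j, v) = true)).card = 1 := by
    intro v
    have := (hrow v).symm.trans (sum_bval_card (fun j => x (j, v)))
    exact_mod_cast this.symm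
  have hcol' : ∀ j : Fin n, (Finset.univ.filter (fun v => x (j, v) = true)).card = 1 := by
    intro j
    have := (hcol j).symm.trans (sum_bval_card (fun v => x (j, v)))
    exact_mod_cast this.symm
  choose f hf using fun v => Finset.card_eq_one.mp (hrow' v)
  have hmem : ∀ j v, x (j, v) = true ↔ j = f v := by
    intro j v
    constructor
    · intro h
      have : j ∈ Finset.univ.filter (fun j => x (j, v) = true) := by simp [h]
      rw [hf v] at this; simpa using this
    · rintro rfl
      have : f v ∈ Finset.univ.filter (fun j => x (j, v) = true) := by
        rw [hf v]; simp
      simpa using this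
  have hinj : Function.Injective f := by
    intro v v' h
    by_contra hne
    have h1 : v ∈ Finset.univ.filter (fun w => x (f v, w) = true) := by
      simp [(hmem (f v) v).mpr rfl]
    have h2 : v' ∈ Finset.univ.filter (fun w => x (f v, w) = true) := by
      simp [(hmem (f v) v').mpr h]
    have := Finset.one_lt_card.mpr ⟨v, h1, v', h2, hne⟩
    rw [hcol' (f v)] at this
    omega
  have hbij : Function.Bijective f := (Finite.injective_iff_bijective).mp hinj
  refine ⟨Equiv.ofBijective f hbij, fun j v => ?_⟩
  rw [hmem j v]
  exact ⟨fun h => h.symm, fun h => h.symm⟩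

lemma HB_nonneg (n : ℕ) [NeZero n] (C : Fin n → Fin n → ℝ) (hC : ∀ i j, 0 ≤ C i j)
    (x : Fin n × Fin n → Bool) : 0 ≤ HB n C x := by
  refine Finset.sum_nonneg fun i _ => Finset.sum_nonneg fun j _ => ?_
  split
  · exact mul_nonneg (hC i j) (Finset.sum_nonneg fun v _ =>
      mul_nonneg (bval_nonneg _) (bval_nonneg _))
  · exact le_refl 0

lemma sq_ge_one_of_ne_one (k : ℕ) (hk : k ≠ 1) : (1 : ℝ) ≤ (1 - (k : ℝ))^2 := by
  rcases Nat.lt_or_ge k 1 with h | h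
  · interval_cases k
    · norm_num
  · have h2 : 2 ≤ k := by omega
    have : (2 : ℝ) ≤ (k : ℝ) := by exact_mod_cast h2
    nlinarith

/-- Under the penalty condition `A > n · max C`, the minimum of the TSP QUBO over all
binary assignments equals the minimum tour length over all cyclic permutations. -/
theorem stmt_3 (n : ℕ) [NeZero n] (hn : 2 ≤ n) (C : Fin n → Fin n → ℝ)
    (hC : ∀ i j, 0 ≤ C i j) (A : ℝ)
    (hA : A > n * Finset.univ.sup'
      (Finset.univ_nonempty_iff.mpr ⟨(⟨0, by omega⟩, ⟨0, by omega⟩)⟩)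
      (fun p : Fin n × Fin n => C p.1 p.2)) :
    Finset.univ.inf' Finset.univ_nonempty
        (fun x : Fin n × Fin n → Bool => HA n A x + HB n C x)
      = Finset.univ.inf' Finset.univ_nonempty
        (fun σ : Equiv.Perm (Fin n) => tourCost n C σ) := by
  set ne1 : (Finset.univ : Finset (Fin n × Fin n)).Nonempty :=
    (Finset.univ_nonempty_iff.mpr ⟨(⟨0, by omega⟩, ⟨0, by omega⟩)⟩)
  set M := Finset.univ.sup' ne1 (fun p : Fin n × Fin n => C p.1 p.2) with hM
  have htour_le : ∀ σ : Equiv.Perm (Fin n), tourCost n C σ ≤ n * M := by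
    intro σ
    have : tourCost n C σ ≤ ∑ _v : Fin n, M :=
      Finset.sum_le_sum fun v _ =>
        Finset.le_sup' (f := fun p : Fin n × Fin n => C p.1 p.2)
          (b := (σ v, σ (v+1))) (Finset.mem_univ _)
    simpa [mul_comm] using this
  -- encoding of a permutation
  have hencode : ∀ σ : Equiv.Perm (Fin n),
      ∀ j v, (fun p : Fin n × Fin n => decide (σ p.2 = p.1)) (j, v) = true ↔ σ v = j := by
    intro σ j v; simp
  have hsums : ∀ σ : Equiv.Perm (Fin n),
      (∀ v : Fin n, ∑ j : Fin n, bval (decide (σ v = j)) = 1) ∧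
      (∀ j : Fin n, ∑ v : Fin n, bval (decide (σ v = j)) = 1) := by
    intro σ
    constructor
    · intro v
      rw [sum_bval_card]
      norm_num
      rw [show (Finset.univ.filter (fun j => σ v = j)) = {σ v} by
        ext j; simp [eq_comm]]
      simp
    · intro j
      rw [sum_bval_card]
      norm_num
      rw [show (Finset.univ.filter (fun v => σ v = j)) = {σ.symm j} by
        ext v; simp [Equiv.apply_eq_iff_eq_symm_apply]]
      simp
  apply le_antisymm
  · -- LHS ≤ each tourCost
    apply Finset.le_inf'
    intro σ _
    set xσ : Fin n × Fin n → Bool := fun p => decide (σ p.2 = p.1) with hxσ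
    have hHA : HA n A xσ = 0 := by
      unfold HA
      have h1 : ∀ j : Fin n, ∑ v : Fin n, bval (xσ (j, v)) = 1 := fun j => (hsums σ).2 j
      have h2 : ∀ v : Fin n, ∑ j : Fin n, bval (xσ (j, v)) = 1 := fun v => (hsums σ).1 v
      simp [h1, h2]
    have hHB : HB n C xσ = tourCost n C σ := HB_perm n hn C σ xσ (hencode σ)
    calc Finset.univ.inf' Finset.univ_nonempty
          (fun x : Fin n × Fin n → Bool => HA n A x + HB n C x)
        ≤ HA n A xσ + HB n C xσ := Finset.inf'_le _ (Finset.mem_univ _)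
      _ = tourCost n C σ := by rw [hHA, hHB, zero_add]
  · -- RHS ≤ each HA + HB
    apply Finset.le_inf'
    intro x _
    by_cases hgood : (∀ v : Fin n, ∑ j : Fin n, bval (x (j, v)) = 1) ∧
        (∀ j : Fin n, ∑ v : Fin n, bval (x (j, v)) = 1)
    · obtain ⟨σ, hσ⟩ := extract_perm x hgood.1 hgood.2
      have hHA : HA n A x = 0 := by
        unfold HA
        simp [hgood.1, hgood.2]
      have hHB : HB n C x = tourCost n C σ := HB_perm n hn C σ x hσ
      calc Finset.univ.inf' Finset.univ_nonempty
            (fun σ : Equiv.Perm (Fin n) => tourCost n C σ)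
          ≤ tourCost n C σ := Finset.inf'_le _ (Finset.mem_univ _)
        _ = HA n A x + HB n C x := by rw [hHA, hHB, zero_add]
    · -- bad case : HA ≥ A
      have hM0 : 0 ≤ M := le_trans (hC 0 0)
        (Finset.le_sup' (f := fun p : Fin n × Fin n => C p.1 p.2) (b := (0,0)) (Finset.mem_univ _))
      have hA0 : 0 < A := lt_of_le_of_lt (by positivity) hA
      have hHA : A ≤ HA n A x := by
        unfold HA
        have hsq : ∀ g : Fin n → Bool, (∑ j, bval (g j)) ≠ 1 →
            (1 : ℝ) ≤ (1 - ∑ j, bval (g j))^2 := by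
          intro g hg
          rw [sum_bval_card] at hg ⊢
          apply sq_ge_one_of_ne_one
          intro h; apply hg; rw [h]; norm_num
        have key : (1:ℝ) ≤ (∑ j : Fin n, (1 - ∑ v : Fin n, bval (x (j, v)))^2) +
            (∑ v : Fin n, (1 - ∑ j : Fin n, bval (x (j, v)))^2) := by
          push_neg at hgood
          by_cases hrow : ∀ v : Fin n, ∑ j : Fin n, bval (x (j, v)) = 1
          · obtain ⟨j, hj⟩ := hgood hrow
            have h1 : (1:ℝ) ≤ ∑ j : Fin n, (1 - ∑ v : Fin n, bval (x (j, v)))^2 :=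
              le_trans (hsq (fun v => x (j, v)) hj)
                (Finset.single_le_sum (f := fun j => (1 - ∑ v : Fin n, bval (x (j, v)))^2)
                  (fun i _ => sq_nonneg _) (Finset.mem_univ j))
            have h2 : (0:ℝ) ≤ ∑ v : Fin n, (1 - ∑ j : Fin n, bval (x (j, v)))^2 :=
              Finset.sum_nonneg fun _ _ => sq_nonneg _
            linarith
          · obtain ⟨v, hv⟩ := not_forall.mp hrow
            have h1 : (1:ℝ) ≤ ∑ v : Fin n, (1 - ∑ j : Fin n, bval (x (j, v)))^2 :=
              le_trans (hsq (fun j => x (j, v)) hv)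
                (Finset.single_le_sum (f := fun v => (1 - ∑ j : Fin n, bval (x (j, v)))^2)
                  (fun i _ => sq_nonneg _) (Finset.mem_univ v))
            have h2 : (0:ℝ) ≤ ∑ j : Fin n, (1 - ∑ v : Fin n, bval (x (j, v)))^2 :=
              Finset.sum_nonneg fun _ _ => sq_nonneg _
            linarith
        nlinarith
      have hHB : 0 ≤ HB n C x := HB_nonneg n C hC x
      calc Finset.univ.inf' Finset.univ_nonempty
            (fun σ : Equiv.Perm (Fin n) => tourCost n C σ)
          ≤ tourCost n C 1 := Finset.inf'_le _ (Finset.mem_univ _)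
        _ ≤ n * M := htour_le 1
        _ ≤ A := le_of_lt hA
        _ ≤ HA n A x + HB n C x := by linarith
end
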